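/- Let n ≥ 7 and let G be a 3-regular graph on n vertices. Then i_3(G) < C(n-3, 3) + 1. More generally, for any δ ≥ 1 and any δ-regular graph G on n vertices, i_3(G) ≤ C(n-δ, 3) + C(δ, 3). -/

import Mathlib

/-!
For a 3-set `s` of vertices compare `e(s)`, the number of ordered adjacent pairs inside `s`, with
`c(s)`, the number of its dominating vertices (those adjacent to the two others). A 3-set that is
not independent has `e(s) ≤ 2 + 2 c(s)`. Summing over all 3-sets, each ordered adjacent pair is
counted in `n - 2` triples and each vertex `v` dominates `C(deg v, 2)` triples, so
`2 i₃ + (∑ deg) (n - 2) ≤ 2 C(n, 3) + 2 ∑ C(deg v, 2)`.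
In the complement every vertex of an independent triple is dominating, which gives
`3 i₃ ≤ ∑ C(n - 1 - deg v, 2)`. For a `δ`-regular graph the first bound yields the theorem when
`n ≥ 2δ` and the second when `n < 2δ`.
-/

open SimpleGraph

/-- `indepT G t` is the number of independent sets of size `t` in `G`,
i.e. the number of `t`-element vertex subsets spanning no edge. -/
noncomputable def indepT {V : Type*} [Fintype V] (G : SimpleGraph V) (t : ℕ) : ℕ :=
  Nat.card {s : Finset V // s.card = t ∧ ∀ u ∈ s, ∀ v ∈ s, ¬ G.Adj u v}

/-- `indepAll G` is the total number of independent sets in `G` (including `∅`). -/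
noncomputable def indepAll {V : Type*} [Fintype V] (G : SimpleGraph V) : ℕ :=
  Nat.card {s : Finset V // ∀ u ∈ s, ∀ v ∈ s, ¬ G.Adj u v}

/-- The degree of a vertex, as the cardinality of its neighbour set. -/
noncomputable def gdeg {V : Type*} (G : SimpleGraph V) (v : V) : ℕ :=
  (G.neighborSet v).ncard

open Finset

theorem Nat.cast_choose_three (a : ℕ) : (a.choose 3 : ℚ) = a * (a - 1) * (a - 2) / 6 := by
  induction a with
  | zero => simp
  | succ a ih => rw [Nat.choose_succ_succ, Nat.cast_add, ih, Nat.cast_choose_two]; push_cast; ring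

namespace SimpleGraph

variable {V : Type*} (G : SimpleGraph V) [DecidableRel G.Adj]

theorem card_filter_adj_eq_zero_of_isIndepSet {s : Finset V} (hs : G.IsIndepSet s) :
    #{p ∈ s ×ˢ s | G.Adj p.1 p.2} = 0 := by
  refine card_eq_zero.2 (filter_eq_empty_iff.2 fun p hp hadj => ?_)
  rw [mem_product] at hp
  exact hs hp.1 hp.2 (G.ne_of_adj hadj) hadj

variable [Fintype V]

theorem card_filter_adj_eq_sum_degree : #{p : V × V | G.Adj p.1 p.2} = ∑ v, G.degree v := by
  rw [card_filter, Fintype.sum_prod_type]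
  simp only [← card_filter, ← neighborFinset_eq_filter, card_neighborFinset_eq_degree]

variable [DecidableEq V]

def dominatingVertices (s : Finset V) : Finset V := {v ∈ s | s.erase v ⊆ G.neighborFinset v}

theorem sum_card_dominatingVertices_le (k : ℕ) :
    ∑ s ∈ univ.powersetCard (k + 1), #(G.dominatingVertices s) ≤ ∑ v, (G.degree v).choose k := by
  calc ∑ s ∈ univ.powersetCard (k + 1), #(G.dominatingVertices s)
      = ∑ v, #{s ∈ univ.powersetCard (k + 1) | v ∈ G.dominatingVertices s} := by
        simp_rw [card_eq_sum_ones]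
        exact sum_comm' fun s v => by simp
    _ ≤ ∑ v, #((G.neighborFinset v).powersetCard k) := by
        refine sum_le_sum fun v _ => card_le_card_of_injOn (·.erase v) ?_ ?_
        · intro s hs
          simp only [dominatingVertices, coe_filter, mem_filter, mem_powersetCard_univ] at hs
          simp [hs.2.2, card_erase_of_mem hs.2.1, hs.1]
        · exact (erase_injOn' v).mono fun s hs => by simp_all [dominatingVertices]
    _ = ∑ v, (G.degree v).choose k := by simp

theorem card_sub_two_le_card_filter_mem_mem {u w : V} (huw : u ≠ w) :
    Fintype.card V - 2 ≤ #{s ∈ univ.powersetCard 3 | u ∈ s ∧ w ∈ s} := by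
  have hcard : #({u, w}ᶜ : Finset V) = Fintype.card V - 2 := by
    rw [card_compl, card_pair huw]
  rw [← hcard]
  refine card_le_card_of_injOn (fun x => {u, w, x}) (fun x hx => ?_) (fun x hx y hy hxy => ?_)
  · simp_all [card_insert_of_notMem, eq_comm]
  · have : x ∈ ({u, w, y} : Finset V) := by simp only at hxy; simp [← hxy]
    simp_all

theorem sum_degree_mul_le_sum_card_filter_adj :
    (∑ v, G.degree v) * (Fintype.card V - 2) ≤
      ∑ s ∈ univ.powersetCard 3, #{p ∈ s ×ˢ s | G.Adj p.1 p.2} := by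
  calc (∑ v, G.degree v) * (Fintype.card V - 2)
      = ∑ p : V × V with G.Adj p.1 p.2, (Fintype.card V - 2) := by
        rw [sum_const, smul_eq_mul, card_filter_adj_eq_sum_degree]
    _ ≤ ∑ p : V × V with G.Adj p.1 p.2, #{s ∈ univ.powersetCard 3 | p.1 ∈ s ∧ p.2 ∈ s} :=
        sum_le_sum fun p hp => card_sub_two_le_card_filter_mem_mem (G.ne_of_adj (mem_filter.1 hp).2)
    _ = ∑ s ∈ univ.powersetCard 3, #{p ∈ s ×ˢ s | G.Adj p.1 p.2} := by
        simp_rw [card_eq_sum_ones]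
        exact sum_comm' fun p s => by simp only [mem_filter, mem_univ, mem_product]; tauto

theorem card_filter_adj_le_of_card_eq_three {s : Finset V} (hs : #s = 3) :
    #{p ∈ s ×ˢ s | G.Adj p.1 p.2} ≤ 2 + 2 * #(G.dominatingVertices s) := by
  obtain ⟨a, b, c, hab, hac, hbc, rfl⟩ := card_eq_three.1 hs
  rw [card_filter, sum_product, dominatingVertices, card_filter]
  by_cases h1 : G.Adj a b <;> by_cases h2 : G.Adj a c <;> by_cases h3 : G.Adj b c <;>
    simp [sum_insert, hab, hac, hbc, h1, h2, h3, G.adj_comm b a, G.adj_comm c a, G.adj_comm c b,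
      insert_subset_iff, erase_insert_of_ne, -sum_boole]

theorem two_mul_card_indepSetFinset_three_add_le :
    2 * #(G.indepSetFinset 3) + (∑ v, G.degree v) * (Fintype.card V - 2) ≤
      2 * (Fintype.card V).choose 3 + 2 * ∑ v, (G.degree v).choose 2 := by
  set T : Finset (Finset V) := univ.powersetCard 3
  have hIT : G.indepSetFinset 3 ⊆ T := fun s hs =>
    mem_powersetCard_univ.2 (mem_indepSetFinset_iff.1 hs).card_eq
  have hindep : ∑ s ∈ G.indepSetFinset 3, #{p ∈ s ×ˢ s | G.Adj p.1 p.2} = 0 :=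
    sum_eq_zero fun s hs => G.card_filter_adj_eq_zero_of_isIndepSet
      (mem_indepSetFinset_iff.1 hs).isIndepSet
  have hdep : ∑ s ∈ T \ G.indepSetFinset 3, #{p ∈ s ×ˢ s | G.Adj p.1 p.2} ≤
      2 * #(T \ G.indepSetFinset 3) + 2 * ∑ s ∈ T, #(G.dominatingVertices s) := by
    calc _ ≤ ∑ s ∈ T \ G.indepSetFinset 3, (2 + 2 * #(G.dominatingVertices s)) :=
          sum_le_sum fun s hs => G.card_filter_adj_le_of_card_eq_three
            (mem_powersetCard_univ.1 (mem_sdiff.1 hs).1)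
      _ ≤ _ := by
          rw [sum_add_distrib, sum_const, smul_eq_mul, ← mul_sum, mul_comm]
          gcongr
          exact sdiff_subset
  have hedges := G.sum_degree_mul_le_sum_card_filter_adj
  rw [← sum_sdiff hIT, hindep] at hedges
  have hdominating : ∑ s ∈ T, #(G.dominatingVertices s) ≤ ∑ v, (G.degree v).choose 2 :=
    G.sum_card_dominatingVertices_le 2
  have hT : #T = (Fintype.card V).choose 3 := by simp [T]
  rw [card_sdiff_of_subset hIT, hT] at hdep
  have := card_le_card hIT
  omega

theorem dominatingVertices_compl_of_isIndepSet {s : Finset V} (hs : G.IsIndepSet s) :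
    Gᶜ.dominatingVertices s = s := by
  refine filter_true_of_mem fun v hv u hu => ?_
  rw [mem_erase] at hu
  rw [mem_neighborFinset, compl_adj]
  exact ⟨hu.1.symm, hs hv hu.2 hu.1.symm⟩

theorem three_mul_card_indepSetFinset_three_le :
    3 * #(G.indepSetFinset 3) ≤ ∑ v, (Gᶜ.degree v).choose 2 := by
  calc 3 * #(G.indepSetFinset 3) = ∑ s ∈ G.indepSetFinset 3, #(Gᶜ.dominatingVertices s) := by
        rw [mul_comm, ← smul_eq_mul, ← sum_const]
        refine sum_congr rfl fun s hs => ?_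
        obtain ⟨hind, hcard⟩ := mem_indepSetFinset_iff.1 hs
        rw [G.dominatingVertices_compl_of_isIndepSet hind, hcard]
    _ ≤ ∑ s ∈ univ.powersetCard 3, #(Gᶜ.dominatingVertices s) :=
        sum_le_sum_of_subset fun s hs =>
          mem_powersetCard_univ.2 (mem_indepSetFinset_iff.1 hs).card_eq
    _ ≤ ∑ v, (Gᶜ.degree v).choose 2 := Gᶜ.sum_card_dominatingVertices_le 2

variable {G}

theorem IsRegularOfDegree.two_mul_card_indepSetFinset_three_add_le {d : ℕ}
    (hG : G.IsRegularOfDegree d) :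
    2 * #(G.indepSetFinset 3) + Fintype.card V * d * (Fintype.card V - 2) ≤
      2 * (Fintype.card V).choose 3 + 2 * (Fintype.card V * d.choose 2) := by
  simpa [hG.degree_eq] using G.two_mul_card_indepSetFinset_three_add_le

theorem IsRegularOfDegree.three_mul_card_indepSetFinset_three_le {d : ℕ}
    (hG : G.IsRegularOfDegree d) :
    3 * #(G.indepSetFinset 3) ≤ Fintype.card V * (Fintype.card V - 1 - d).choose 2 := by
  simpa [hG.compl.degree_eq] using G.three_mul_card_indepSetFinset_three_le

end SimpleGraph

theorem Nat.le_choose_sub_three_add_choose_three_of_counts {n d i : ℕ}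
    (hA : 2 * i + n * d * (n - 2) ≤ 2 * n.choose 3 + 2 * (n * d.choose 2))
    (hB : 3 * i ≤ n * (n - 1 - d).choose 2) :
    i ≤ (n - d).choose 3 + d.choose 3 := by
  rcases le_or_gt n (d + 2) with hn | hn
  · rw [Nat.choose_eq_zero_of_lt (by omega : n - 1 - d < 2)] at hB
    omega
  rw [← Nat.cast_le (α := ℚ)] at hA hB ⊢
  push_cast [Nat.cast_choose_three, Nat.cast_choose_two, Nat.cast_sub (by omega : 2 ≤ n),
    Nat.cast_sub (by omega : d ≤ n), Nat.cast_sub (by omega : d ≤ n - 1),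
    Nat.cast_sub (by omega : 1 ≤ n)] at hA hB ⊢
  have hd0 : (0 : ℚ) ≤ d := d.cast_nonneg
  have hn3 : (3 : ℚ) ≤ n := by exact_mod_cast (by omega : 3 ≤ n)
  -- `6 ((n-d).choose 3 + d.choose 3)` exceeds `6 i` as bounded by `hA` by `3 d (n - 2d)`, and as
  -- bounded by `hB` by `d (2d - n) (n - 3)`.
  rcases le_or_gt (2 * d) n with hd | hd
  · have hd' : (2 * d : ℚ) ≤ n := by exact_mod_cast hd
    nlinarith [mul_nonneg hd0 (sub_nonneg.2 hd')]
  · have hd' : (n : ℚ) ≤ 2 * d := by exact_mod_cast hd.le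
    nlinarith [mul_nonneg (mul_nonneg hd0 (sub_nonneg.2 hd')) (sub_nonneg.2 hn3)]

theorem Nat.lt_choose_sub_three_add_one_of_count {n i : ℕ} (hn : 7 ≤ n)
    (hA : 2 * i + n * 3 * (n - 2) ≤ 2 * n.choose 3 + 2 * (n * (3 : ℕ).choose 2)) :
    i < (n - 3).choose 3 + 1 := by
  rw [← Nat.cast_le (α := ℚ)] at hA
  rw [← Nat.cast_lt (α := ℚ)]
  push_cast [Nat.cast_choose_three, Nat.cast_choose_two, Nat.cast_sub (by omega : 2 ≤ n),
    Nat.cast_sub (by omega : 3 ≤ n)] at hA ⊢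
  have hn' : (7 : ℚ) ≤ n := by exact_mod_cast hn
  -- `hA` says `6 i ≤ 6 ((n-3).choose 3) - 9 n + 60`.
  nlinarith

theorem indepT_eq_card_indepSetFinset {V : Type*} [Fintype V] [DecidableEq V]
    (G : SimpleGraph V) [DecidableRel G.Adj] (t : ℕ) :
    indepT G t = #(G.indepSetFinset t) := by
  rw [indepT, Nat.card_eq_fintype_card, Fintype.card_subtype, indepSetFinset]
  congr! 2 with s
  simp only [isNIndepSet_iff, isIndepSet_iff, Set.Pairwise, mem_coe]
  constructor
  · exact fun ⟨hcard, hs⟩ => ⟨fun u hu v hv _ => hs u hu v hv, hcard⟩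
  · exact fun ⟨hs, hcard⟩ => ⟨hcard, fun u hu v hv huv => hs hu hv (G.ne_of_adj huv) huv⟩

theorem gdeg_eq_degree {V : Type*} (G : SimpleGraph V) (v : V) [Fintype (G.neighborSet v)] :
    gdeg G v = G.degree v := by
  rw [gdeg, ← Nat.card_coe_set_eq, Nat.card_eq_fintype_card, card_neighborSet_eq_degree]

/-- Every 3-regular graph on `n ≥ 7` vertices has strictly fewer than `C(n-3,3) + 1`
independent sets of size 3; more generally, every `δ`-regular graph on `n` vertices has
at most `C(n-δ,3) + C(δ,3)` independent sets of size 3. -/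
theorem stmt_18 :
    (∀ (n : ℕ) (V : Type) [Fintype V] (G : SimpleGraph V),
      7 ≤ n → Fintype.card V = n → (∀ v, gdeg G v = 3) →
      indepT G 3 < (n - 3).choose 3 + 1) ∧
    (∀ (δ n : ℕ) (V : Type) [Fintype V] (G : SimpleGraph V),
      1 ≤ δ → Fintype.card V = n → (∀ v, gdeg G v = δ) →
      indepT G 3 ≤ (n - δ).choose 3 + δ.choose 3) := by
  classical
  refine ⟨fun n V _ G hn hcard hdeg => ?_, fun δ n V _ G _ hcard hdeg => ?_⟩
  · have hG : G.IsRegularOfDegree 3 := fun v => (gdeg_eq_degree G v).symm.trans (hdeg v)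
    subst hcard
    rw [indepT_eq_card_indepSetFinset]
    exact Nat.lt_choose_sub_three_add_one_of_count hn hG.two_mul_card_indepSetFinset_three_add_le
  · have hG : G.IsRegularOfDegree δ := fun v => (gdeg_eq_degree G v).symm.trans (hdeg v)
    subst hcard
    rw [indepT_eq_card_indepSetFinset]
    exact Nat.le_choose_sub_three_add_choose_three_of_counts
      hG.two_mul_card_indepSetFinset_three_add_le hG.three_mul_card_indepSetFinset_three_le
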